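/- For every complex number q with |q| < 1, ∑_{n≥1} q^n (q^n; q)_∞ (−q^{n+1}; q)_∞^2 (q^3; q^3)_{n−1} = (q^2; q^2)_∞ / (q; q^2)_∞ − (q^3; q^3)_∞. -/

import Mathlib

/-- Finite q-Pochhammer symbol `(a; q)_n = ∏_{j=0}^{n-1} (1 - a q^j)`. -/
noncomputable def qPoch (q a : ℂ) (n : ℕ) : ℂ := ∏ j ∈ Finset.range n, (1 - a * q ^ j)

/-- Infinite q-Pochhammer symbol `(a; q)_∞ = ∏_{j=0}^{∞} (1 - a q^j)`. -/
noncomputable def qPochInf (q a : ℂ) : ℂ := ∏' j : ℕ, (1 - a * q ^ j)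

/-!
Write `tailProd q n = (q^{n+1}; q)_∞ (-q^{n+1}; q)_∞² (q³; q³)_n`. Since
`(1 - x)(1 + x)² - (1 - x³) = x(1 - x)`, the `n`-th summand (with `x = q^{n+1}`) is
`tailProd q n - tailProd q (n + 1)`, so the series telescopes to `tailProd q 0 - (q³; q³)_∞`.
Finally `tailProd q 0 = (q; q)_∞ (-q; q)_∞²`, which is `(q²; q²)_∞ / (q; q²)_∞` by
`(q; q)_∞ (-q; q)_∞ = (q²; q²)_∞` and Euler's identity `(q; q²)_∞ (-q; q)_∞ = 1`.
-/

open Filter Topology Asymptotics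

lemma hasSum_sub_succ_of_tendsto {G : Type*} [AddCommGroup G] [TopologicalSpace G]
    [IsTopologicalAddGroup G] [T2Space G] {f : ℕ → G} {l : G}
    (hs : Summable fun n ↦ f n - f (n + 1)) (hf : Tendsto f atTop (𝓝 l)) :
    HasSum (fun n ↦ f n - f (n + 1)) (f 0 - l) := by
  rw [hs.hasSum_iff_tendsto_nat]
  simpa only [Finset.sum_range_sub'] using tendsto_const_nhds.sub hf

lemma summable_pow_mul_of_tendsto {R : Type*} [NormedRing R] [NormOneClass R] [CompleteSpace R]
    {q : R} (hq : ‖q‖ < 1) {u : ℕ → R} {l : R} (hu : Tendsto u atTop (𝓝 l)) :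
    Summable fun n ↦ q ^ n * u n := by
  refine summable_of_isBigO_nat (summable_geometric_of_lt_one (norm_nonneg q) hq) ?_
  have hpow : (fun n ↦ q ^ n) =O[atTop] fun n ↦ ‖q‖ ^ n :=
    isBigO_of_le _ fun n ↦ by simpa using norm_pow_le q n
  simpa using hpow.mul (hu.isBigO_one ℝ)

section QPochhammer

variable {Q : ℂ}

lemma qPoch_succ (a : ℂ) (n : ℕ) : qPoch Q a (n + 1) = qPoch Q a n * (1 - a * Q ^ n) :=
  Finset.prod_range_succ _ n

lemma qPochInf_zero : qPochInf Q 0 = 1 := by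
  simp [qPochInf]

lemma norm_pow_lt_one (hQ : ‖Q‖ < 1) {k : ℕ} (hk : k ≠ 0) : ‖Q ^ k‖ < 1 := by
  rw [norm_pow]
  exact pow_lt_one₀ (norm_nonneg Q) hQ hk

lemma summable_norm_mul_pow (hQ : ‖Q‖ < 1) (a : ℂ) : Summable fun j : ℕ ↦ ‖a * Q ^ j‖ := by
  simpa using (summable_geometric_of_lt_one (norm_nonneg Q) hQ).mul_left ‖a‖

lemma multipliable_one_sub_mul_pow (hQ : ‖Q‖ < 1) (a : ℂ) :
    Multipliable fun j : ℕ ↦ 1 - a * Q ^ j := by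
  simpa [sub_eq_add_neg] using
    multipliable_one_add_of_summable (f := fun j ↦ -(a * Q ^ j))
      (by simpa using summable_norm_mul_pow hQ a)

lemma tendsto_qPoch_qPochInf (hQ : ‖Q‖ < 1) (a : ℂ) :
    Tendsto (qPoch Q a) atTop (𝓝 (qPochInf Q a)) :=
  (multipliable_one_sub_mul_pow hQ a).hasProd.tendsto_prod_nat

lemma qPochInf_ne_zero (hQ : ‖Q‖ < 1) {a : ℂ} (ha : ‖a‖ < 1) : qPochInf Q a ≠ 0 := by
  have hfactor (j : ℕ) : 1 + -(a * Q ^ j) ≠ 0 := by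
    rw [← sub_eq_add_neg, sub_ne_zero]
    intro h
    have : ‖a * Q ^ j‖ < 1 := by
      rw [norm_mul, norm_pow]
      exact mul_lt_one_of_nonneg_of_lt_one_left (norm_nonneg a) ha
        (pow_le_one₀ (norm_nonneg Q) hQ.le)
    simp [← h] at this
  simpa [qPochInf, sub_eq_add_neg] using
    tprod_one_add_ne_zero_of_summable hfactor
      (by simpa using summable_norm_mul_pow hQ a)

lemma qPochInf_eq_one_sub_mul (hQ : ‖Q‖ < 1) (a : ℂ) :
    qPochInf Q a = (1 - a) * qPochInf Q (a * Q) := by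
  have hshift : (fun j : ℕ ↦ 1 - a * Q ^ (j + 1)) = fun j ↦ 1 - a * Q * Q ^ j := by
    ext j; ring
  rw [qPochInf, tprod_eq_zero_mul' (hshift ▸ multipliable_one_sub_mul_pow hQ (a * Q)), hshift]
  simp [qPochInf]

lemma continuous_qPochInf (hQ : ‖Q‖ < 1) : Continuous (qPochInf Q) := by
  refine continuous_iff_continuousAt.2 fun a₀ ↦ ?_
  have hnear : ∀ᶠ a in 𝓝 a₀, ‖a‖ ≤ ‖a₀‖ + 1 :=
    (continuous_norm.tendsto a₀).eventually (eventually_le_nhds (lt_add_one _))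
  have h := tendsto_tprod_one_add_of_dominated_convergence
    (f := fun a j ↦ -(a * Q ^ j)) (g := fun j ↦ -(a₀ * Q ^ j))
    ((summable_geometric_of_lt_one (norm_nonneg Q) hQ).mul_left (‖a₀‖ + 1))
    (fun j ↦ (Continuous.tendsto (by fun_prop) a₀))
    (hnear.mono fun a ha j ↦ by rw [norm_neg, norm_mul, norm_pow]; gcongr)
  unfold ContinuousAt qPochInf
  simpa only [sub_eq_add_neg] using h

lemma tendsto_qPochInf_one {α : Type*} {l : Filter α} (hQ : ‖Q‖ < 1) {σ : α → ℂ}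
    (hσ : Tendsto σ l (𝓝 0)) : Tendsto (fun x ↦ qPochInf Q (σ x)) l (𝓝 1) := by
  have h := ((continuous_qPochInf hQ).tendsto 0).comp hσ
  rwa [qPochInf_zero] at h

lemma qPochInf_mul_qPochInf_neg (hQ : ‖Q‖ < 1) (a : ℂ) :
    qPochInf Q a * qPochInf Q (-a) = qPochInf (Q ^ 2) (a ^ 2) := by
  rw [qPochInf, qPochInf, ← (multipliable_one_sub_mul_pow hQ a).tprod_mul
    (multipliable_one_sub_mul_pow hQ (-a))]
  exact tprod_congr fun j ↦ by ring

lemma qPochInf_sq_mul_qPochInf_sq (hQ : ‖Q‖ < 1) (a : ℂ) :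
    qPochInf (Q ^ 2) a * qPochInf (Q ^ 2) (a * Q) = qPochInf Q a := by
  have heven : Multipliable fun k : ℕ ↦ 1 - a * Q ^ (2 * k) := by
    simpa only [pow_mul] using multipliable_one_sub_mul_pow (norm_pow_lt_one hQ two_ne_zero) a
  have hodd : Multipliable fun k : ℕ ↦ 1 - a * Q ^ (2 * k + 1) :=
    (multipliable_one_sub_mul_pow (norm_pow_lt_one hQ two_ne_zero) (a * Q)).congr fun k ↦ by ring
  have h := tprod_even_mul_odd (f := fun k ↦ 1 - a * Q ^ k) heven hodd
  rw [qPochInf, qPochInf, qPochInf, ← h]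
  congr 1 <;> exact tprod_congr fun k ↦ by ring

lemma qPochInf_sq_self_mul_qPochInf_neg_self (hQ : ‖Q‖ < 1) :
    qPochInf (Q ^ 2) Q * qPochInf Q (-Q) = 1 := by
  have hsplit := qPochInf_sq_mul_qPochInf_sq hQ Q
  have hpair := qPochInf_mul_qPochInf_neg hQ Q
  have hne : qPochInf (Q ^ 2) (Q ^ 2) ≠ 0 :=
    qPochInf_ne_zero (norm_pow_lt_one hQ two_ne_zero) (norm_pow_lt_one hQ two_ne_zero)
  rw [← sq] at hsplit
  rw [← hsplit] at hpair
  refine mul_left_cancel₀ hne ?_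
  linear_combination hpair

end QPochhammer

section Telescoping

noncomputable def tailProd (q : ℂ) (n : ℕ) : ℂ :=
  qPochInf q (q ^ (n + 1)) * qPochInf q (-q ^ (n + 1)) ^ 2 * qPoch (q ^ 3) (q ^ 3) n

variable {q : ℂ}

lemma tailProd_sub_tailProd_succ (hq : ‖q‖ < 1) (n : ℕ) :
    tailProd q n - tailProd q (n + 1) = q ^ (n + 1) * qPochInf q (q ^ (n + 1)) *
      qPochInf q (-q ^ (n + 2)) ^ 2 * qPoch (q ^ 3) (q ^ 3) n := by
  have hpos := qPochInf_eq_one_sub_mul hq (q ^ (n + 1))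
  have hneg := qPochInf_eq_one_sub_mul hq (-q ^ (n + 1))
  rw [← pow_succ] at hpos
  rw [neg_mul, ← pow_succ, sub_neg_eq_add] at hneg
  have hcube : q ^ 3 * (q ^ 3) ^ n = (q ^ (n + 1)) ^ 3 := by ring
  rw [tailProd, tailProd, qPoch_succ, hcube, hpos, hneg]
  ring

lemma tendsto_pow_add_nhds_zero (hq : ‖q‖ < 1) (k : ℕ) :
    Tendsto (fun n ↦ q ^ (n + k)) atTop (𝓝 0) :=
  (tendsto_pow_atTop_nhds_zero_of_norm_lt_one hq).comp (tendsto_add_atTop_nat k)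

lemma tendsto_tailProd (hq : ‖q‖ < 1) :
    Tendsto (tailProd q) atTop (𝓝 (qPochInf (q ^ 3) (q ^ 3))) := by
  have hpos := tendsto_qPochInf_one hq (tendsto_pow_add_nhds_zero hq 1)
  have hneg := tendsto_qPochInf_one hq (by simpa using (tendsto_pow_add_nhds_zero hq 1).neg)
  have h := (hpos.mul (hneg.pow 2)).mul
    (tendsto_qPoch_qPochInf (norm_pow_lt_one hq three_ne_zero) (q ^ 3))
  rw [one_pow, one_mul, one_mul] at h
  exact h

lemma summable_tailProd_sub_succ (hq : ‖q‖ < 1) :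
    Summable fun n ↦ tailProd q n - tailProd q (n + 1) := by
  have hpos := tendsto_qPochInf_one hq (tendsto_pow_add_nhds_zero hq 1)
  have hneg := tendsto_qPochInf_one hq (by simpa using (tendsto_pow_add_nhds_zero hq 2).neg)
  have hfin := tendsto_qPoch_qPochInf (norm_pow_lt_one hq three_ne_zero) (q ^ 3)
  refine (summable_pow_mul_of_tendsto hq
    (((tendsto_const_nhds (x := q)).mul hpos).mul (hneg.pow 2) |>.mul hfin)).congr fun n ↦ ?_
  rw [tailProd_sub_tailProd_succ hq]
  ring

lemma tailProd_zero (hq : ‖q‖ < 1) :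
    tailProd q 0 = qPochInf (q ^ 2) (q ^ 2) / qPochInf (q ^ 2) q := by
  have heuler := qPochInf_sq_self_mul_qPochInf_neg_self hq
  rw [eq_div_iff (left_ne_zero_of_mul_eq_one heuler), ← qPochInf_mul_qPochInf_neg hq q]
  simp only [tailProd, zero_add, pow_one, qPoch, Finset.range_zero, Finset.prod_empty, mul_one]
  linear_combination qPochInf q q * qPochInf q (-q) * heuler

end Telescoping

theorem thmAp_a (q : ℂ) (hq : ‖q‖ < 1) :
    ∑' n : ℕ, q ^ (n + 1) * qPochInf q (q ^ (n + 1)) *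
        (qPochInf q (-q ^ (n + 2))) ^ 2 * qPoch (q ^ 3) (q ^ 3) n
      = qPochInf (q ^ 2) (q ^ 2) / qPochInf (q ^ 2) q - qPochInf (q ^ 3) (q ^ 3) := by
  have h := hasSum_sub_succ_of_tendsto (summable_tailProd_sub_succ hq) (tendsto_tailProd hq)
  simp only [tailProd_sub_tailProd_succ hq, tailProd_zero hq] at h
  exact h.tsum_eq
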